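/- Let K̃ = {(c₁,c₂,c₃,c₄) ∈ ℝ⁴ : the system AF ≤ f with constant data fᵢ ≡ cᵢ admits a continuous solution F : E → ℝ²}. Then K̃ cannot be defined by finitely many linear inequalities: there do not exist finitely many vectors a⁽¹⁾,…,a⁽ᵏ⁾ ∈ ℝ⁴, reals b₁,…,b_k, and for each j a choice of strict or non-strict inequality, such that K̃ = ⋂ⱼ {c ∈ ℝ⁴ : a⁽ʲ⁾·c ≤ bⱼ (respectively a⁽ʲ⁾·c < bⱼ)}. -/

import Mathlib

open Real Set

/-- The closed unit square `E = [0,1] × [0,1]` in `ℝ²`. -/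
def E : Set (ℝ × ℝ) := Set.Icc 0 1 ×ˢ Set.Icc 0 1

/-- `F` solves the system `A F ≤ f` on `E`. -/
def Solves (f1 f2 f3 f4 : ℝ × ℝ → ℝ) (F : ℝ × ℝ → ℝ × ℝ) : Prop :=
  (∀ x ∈ E, x ≠ ((0 : ℝ), (0 : ℝ)) →
    (x.1 ^ 4 / (x.1 ^ 2 + x.2 ^ 2) ^ 2 * (F x).1 + x.2 ^ 4 / (x.1 ^ 2 + x.2 ^ 2) ^ 2 * (F x).2 ≤ f1 x ∧
     x.2 ^ 4 / (x.1 ^ 2 + x.2 ^ 2) ^ 2 * (F x).1 - x.1 ^ 4 / (x.1 ^ 2 + x.2 ^ 2) ^ 2 * (F x).2 ≤ f2 x ∧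
     -(x.1 ^ 4 / (x.1 ^ 2 + x.2 ^ 2) ^ 2) * (F x).1 - x.2 ^ 4 / (x.1 ^ 2 + x.2 ^ 2) ^ 2 * (F x).2 ≤ f3 x ∧
     -(x.2 ^ 4 / (x.1 ^ 2 + x.2 ^ 2) ^ 2) * (F x).1 + x.1 ^ 4 / (x.1 ^ 2 + x.2 ^ 2) ^ 2 * (F x).2 ≤ f4 x)) ∧
  (0 ≤ f1 (0, 0) ∧ 0 ≤ f2 (0, 0) ∧ 0 ≤ f4 (0, 0) ∧ -(10 : ℝ) ^ 6 * (F (0, 0)).1 ≤ f3 (0, 0))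

/-- Membership in the feasible set via a constant solution `F = (A, B)`. -/
lemma mem_K (c : Fin 4 → ℝ) (A B : ℝ) (hA : 0 < A) (hB : 0 < B)
    (h10 : A ≤ c 0) (h20 : B ≤ c 0) (h11 : A ≤ c 1) (h13 : B ≤ c 3)
    (h3 : 0 ≤ A * B + (A + B) * c 2)
    (h6 : -(10:ℝ)^6 * A ≤ c 2) :
    ∃ F : ℝ × ℝ → ℝ × ℝ, ContinuousOn F E ∧
      Solves (fun _ => c 0) (fun _ => c 1) (fun _ => c 2) (fun _ => c 3) F := by
  refine ⟨fun _ => (A, B), continuousOn_const, ?_, ?_, ?_, ?_, ?_⟩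
  · intro x hx hne
    dsimp only
    have hx1 : x.1 ≠ 0 ∨ x.2 ≠ 0 := by
      by_contra h
      push_neg at h
      exact hne (Prod.ext h.1 h.2)
    have hS : 0 < x.1 ^ 2 + x.2 ^ 2 := by
      rcases hx1 with h | h
      · have : 0 < x.1 ^ 2 := by positivity
        nlinarith [sq_nonneg x.2]
      · have : 0 < x.2 ^ 2 := by positivity
        nlinarith [sq_nonneg x.1]
    have hS2 : (0:ℝ) < (x.1 ^ 2 + x.2 ^ 2) ^ 2 := by positivity
    have hAB : (0:ℝ) < A + B := by linarith
    set u : ℝ := x.1 ^ 4 / (x.1 ^ 2 + x.2 ^ 2) ^ 2 with hu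
    set v : ℝ := x.2 ^ 4 / (x.1 ^ 2 + x.2 ^ 2) ^ 2 with hv
    have hu0 : 0 ≤ u := by rw [hu]; positivity
    have hv0 : 0 ≤ v := by rw [hv]; positivity
    have huv : u + v ≤ 1 := by
      rw [hu, hv, ← add_div, div_le_one hS2]
      nlinarith [sq_nonneg (x.1 * x.2)]
    have hcurve : A * B ≤ (A + B) * (u * A + v * B) := by
      have heq : u * A + v * B = (x.1 ^ 4 * A + x.2 ^ 4 * B) / (x.1 ^ 2 + x.2 ^ 2) ^ 2 := by
        rw [hu, hv]; ring
      rw [heq, ← mul_div_assoc, le_div_iff₀ hS2]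
      nlinarith [sq_nonneg (A * x.1 ^ 2 - B * x.2 ^ 2)]
    refine ⟨?_, ?_, ?_, ?_⟩
    · nlinarith [mul_le_mul_of_nonneg_left h10 hu0, mul_le_mul_of_nonneg_left h20 hv0]
    · nlinarith [mul_le_mul_of_nonneg_left h11 hv0, mul_nonneg hu0 hB.le,
        mul_nonneg hv0 hA.le]
    · nlinarith [hcurve, h3]
    · nlinarith [mul_le_mul_of_nonneg_left h13 hu0, mul_nonneg hv0 hA.le,
        mul_nonneg hu0 hB.le]
  · simpa using le_trans hA.le h10
  · simpa using le_trans hA.le h11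
  · simpa using le_trans hB.le h13
  · simpa using h6

/-- Limit of a linear functional of `F` along the ray `(s₁/(n+1), s₂/(n+1))`. -/
lemma ray_limit (F : ℝ × ℝ → ℝ × ℝ) (hF : ContinuousOn F E) (s₁ s₂ : ℝ)
    (h01 : 0 ≤ s₁) (h11 : s₁ ≤ 1) (h02 : 0 ≤ s₂) (h12 : s₂ ≤ 1)
    (α β C : ℝ)
    (h : ∀ n : ℕ, α * (F (s₁ / (n + 1), s₂ / (n + 1))).1
        + β * (F (s₁ / (n + 1), s₂ / (n + 1))).2 ≤ C) :
    α * (F (0, 0)).1 + β * (F (0, 0)).2 ≤ C := by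
  have h0E : ((0:ℝ), (0:ℝ)) ∈ E := by
    constructor <;> constructor <;> norm_num
  have hmem : ∀ n : ℕ, ((s₁ / (n + 1), s₂ / (n + 1)) : ℝ × ℝ) ∈ E := by
    intro n
    have hn : (1:ℝ) ≤ (n:ℝ) + 1 := by
      have : (0:ℝ) ≤ (n:ℝ) := Nat.cast_nonneg n
      linarith
    constructor
    · constructor
      · positivity
      · rw [div_le_one (by positivity)]; linarith
    · constructor
      · positivity
      · rw [div_le_one (by positivity)]; linarith
  have htend0 : Filter.Tendsto (fun n : ℕ => ((s₁ / (n + 1), s₂ / (n + 1)) : ℝ × ℝ))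
      Filter.atTop (nhds ((0:ℝ), (0:ℝ))) := by
    have h1 : Filter.Tendsto (fun n : ℕ => s₁ / (n + 1)) Filter.atTop (nhds 0) := by
      have := tendsto_one_div_add_atTop_nhds_zero_nat.const_mul s₁
      simpa [div_eq_mul_inv, mul_comm, mul_assoc] using this
    have h2 : Filter.Tendsto (fun n : ℕ => s₂ / (n + 1)) Filter.atTop (nhds 0) := by
      have := tendsto_one_div_add_atTop_nhds_zero_nat.const_mul s₂
      simpa [div_eq_mul_inv, mul_comm, mul_assoc] using this
    exact h1.prodMk_nhds h2
  have htendE : Filter.Tendsto (fun n : ℕ => ((s₁ / (n + 1), s₂ / (n + 1)) : ℝ × ℝ))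
      Filter.atTop (nhdsWithin ((0:ℝ), (0:ℝ)) E) :=
    tendsto_nhdsWithin_of_tendsto_nhds_of_eventually_within _ htend0
      (Filter.Eventually.of_forall hmem)
  have hFt : Filter.Tendsto (fun n : ℕ => F (s₁ / (n + 1), s₂ / (n + 1)))
      Filter.atTop (nhds (F (0, 0))) := (hF _ h0E).tendsto.comp htendE
  have hlin : Filter.Tendsto (fun n : ℕ => α * (F (s₁ / (n + 1), s₂ / (n + 1))).1
      + β * (F (s₁ / (n + 1), s₂ / (n + 1))).2) Filter.atTop
      (nhds (α * (F (0, 0)).1 + β * (F (0, 0)).2)) := by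
    have h1 : Filter.Tendsto (fun n : ℕ => (F (s₁ / (n + 1), s₂ / (n + 1))).1)
        Filter.atTop (nhds (F (0, 0)).1) :=
      (Continuous.tendsto continuous_fst _).comp hFt
    have h2 : Filter.Tendsto (fun n : ℕ => (F (s₁ / (n + 1), s₂ / (n + 1))).2)
        Filter.atTop (nhds (F (0, 0)).2) :=
      (Continuous.tendsto continuous_snd _).comp hFt
    exact (h1.const_mul α).add (h2.const_mul β)
  exact le_of_tendsto hlin (Filter.Eventually.of_forall h)

/-- Non-membership: the key directional obstruction. -/
lemma nonmem_K (c : Fin 4 → ℝ) (t : ℝ) (ht0 : 0 ≤ t) (ht1 : t ≤ 1)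
    (hkey : t ^ 2 * c 1 + (1 - t) ^ 2 * c 3 < -(c 2)) :
    ¬ ∃ F : ℝ × ℝ → ℝ × ℝ, ContinuousOn F E ∧
      Solves (fun _ => c 0) (fun _ => c 1) (fun _ => c 2) (fun _ => c 3) F := by
  rintro ⟨F, hF, hsol, -⟩
  set A' := (F (0, 0)).1 with hA'
  set B' := (F (0, 0)).2 with hB'
  -- Direction (0,1): A' ≤ c 1
  have L1 : 1 * A' + 0 * B' ≤ c 1 := by
    apply ray_limit F hF 0 1 le_rfl zero_le_one zero_le_one le_rfl
    intro n
    have hn : ((n:ℝ) + 1) ≠ 0 := by positivity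
    have hx := hsol (0 / (n + 1), 1 / (n + 1)) ?_ ?_
    · have h2 := hx.2.1
      have hr : (1:ℝ) / (n + 1) ≠ 0 := ne_of_gt (by positivity)
      simp only [zero_div] at h2 ⊢
      rw [show ((0:ℝ))^4 = 0 by norm_num, show ((0:ℝ))^2 = 0 by norm_num] at h2
      rw [zero_add, zero_div, zero_mul, sub_zero, ← pow_mul] at h2
      rw [div_self (by positivity : ((1:ℝ)/(n+1))^(2*2) ≠ 0)] at h2
      · simpa using h2
    · constructor
      · constructor <;> norm_num
      · constructor
        · positivity
        · rw [div_le_one (by positivity)]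
          have : (0:ℝ) ≤ (n:ℝ) := Nat.cast_nonneg n
          linarith
    · simp only [ne_eq, Prod.mk.injEq, not_and, zero_div]
      intro _
      positivity
  -- Direction (1,0): B' ≤ c 3
  have L2 : 0 * A' + 1 * B' ≤ c 3 := by
    apply ray_limit F hF 1 0 zero_le_one le_rfl le_rfl zero_le_one
    intro n
    have hx := hsol (1 / (n + 1), 0 / (n + 1)) ?_ ?_
    · have h2 := hx.2.2.2
      simp only [zero_div] at h2 ⊢
      rw [show ((0:ℝ))^4 = 0 by norm_num, show ((0:ℝ))^2 = 0 by norm_num] at h2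
      rw [add_zero, zero_div, neg_zero, zero_mul, zero_add, ← pow_mul] at h2
      rw [div_self (by positivity : ((1:ℝ)/(n+1))^(2*2) ≠ 0)] at h2
      simpa using h2
    · constructor
      · constructor
        · positivity
        · rw [div_le_one (by positivity)]
          have : (0:ℝ) ≤ (n:ℝ) := Nat.cast_nonneg n
          linarith
      · constructor <;> norm_num
    · simp only [ne_eq, Prod.mk.injEq, not_and, zero_div]
      intro h
      exfalso
      have : (1:ℝ) / (n+1) ≠ 0 := by positivity
      exact this h
  -- Direction t: t^2 A' + (1-t)^2 B' ≥ -(c 2)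
  have L3 : (-(t^2)) * A' + (-((1-t)^2)) * B' ≤ c 2 := by
    apply ray_limit F hF (Real.sqrt t) (Real.sqrt (1 - t)) (Real.sqrt_nonneg _)
      (Real.sqrt_le_one.mpr ht1)
      (Real.sqrt_nonneg _)
      (Real.sqrt_le_one.mpr (by linarith))
    intro n
    have hn : (0:ℝ) < (n:ℝ) + 1 := by positivity
    set r : ℝ := 1 / ((n:ℝ) + 1) with hrdef
    have hr : (0:ℝ) < r := by positivity
    have hxeq1 : Real.sqrt t / ((n:ℝ) + 1) = Real.sqrt t * r := by rw [hrdef]; ring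
    have hxeq2 : Real.sqrt (1 - t) / ((n:ℝ) + 1) = Real.sqrt (1 - t) * r := by rw [hrdef]; ring
    have hsq1 : (Real.sqrt t * r) ^ 2 = t * r ^ 2 := by
      rw [mul_pow, Real.sq_sqrt ht0]
    have hsq2 : (Real.sqrt (1 - t) * r) ^ 2 = (1 - t) * r ^ 2 := by
      rw [mul_pow, Real.sq_sqrt (by linarith)]
    have hsum : (Real.sqrt t * r) ^ 2 + (Real.sqrt (1 - t) * r) ^ 2 = r ^ 2 := by
      rw [hsq1, hsq2]; ring
    have hx := hsol (Real.sqrt t * r, Real.sqrt (1 - t) * r) ?_ ?_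
    · have h2 := hx.2.2.1
      simp only at h2
      rw [hxeq1, hxeq2]
      have e4a : (Real.sqrt t * r) ^ 4 = t ^ 2 * r ^ 4 := by
        rw [show 4 = 2 * 2 by rfl, pow_mul, hsq1, mul_pow, ← pow_mul]
      have e4b : (Real.sqrt (1 - t) * r) ^ 4 = (1 - t) ^ 2 * r ^ 4 := by
        rw [show 4 = 2 * 2 by rfl, pow_mul, hsq2, mul_pow, ← pow_mul]
      rw [hsum, e4a, e4b, ← pow_mul] at h2
      have hr4 : (r : ℝ) ^ (2 * 2) ≠ 0 := by positivity
      rw [mul_div_assoc, mul_div_assoc, div_self hr4, mul_one, mul_one] at h2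
      linarith
    · have hr1 : r ≤ 1 := by
        rw [hrdef, div_le_one hn]
        have : (0:ℝ) ≤ (n:ℝ) := Nat.cast_nonneg n
        linarith
      have hst1 : Real.sqrt t ≤ 1 := by
        exact Real.sqrt_le_one.mpr ht1
      have hst2 : Real.sqrt (1 - t) ≤ 1 := by
        exact Real.sqrt_le_one.mpr (by linarith)
      constructor
      · constructor
        · positivity
        · calc Real.sqrt t * r ≤ 1 * 1 := by
                apply mul_le_mul hst1 hr1 hr.le zero_le_one
            _ = 1 := by norm_num
      · constructor
        · positivity
        · calc Real.sqrt (1 - t) * r ≤ 1 * 1 := by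
                apply mul_le_mul hst2 hr1 hr.le zero_le_one
            _ = 1 := by norm_num
    · intro hcon
      have h1 : Real.sqrt t * r = 0 := (Prod.mk.injEq _ _ _ _ ▸ hcon).1
      have h2 : Real.sqrt (1 - t) * r = 0 := (Prod.mk.injEq _ _ _ _ ▸ hcon).2
      have hs1 : Real.sqrt t = 0 := by
        rcases mul_eq_zero.mp h1 with h | h
        · exact h
        · exact absurd h hr.ne'
      have hs2 : Real.sqrt (1 - t) = 0 := by
        rcases mul_eq_zero.mp h2 with h | h
        · exact h
        · exact absurd h hr.ne'
      have ht' : t = 0 := by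
        have := Real.sqrt_eq_zero ht0 |>.mp hs1
        exact this
      have ht'' : 1 - t = 0 := by
        have := Real.sqrt_eq_zero (by linarith) |>.mp hs2
        exact this
      linarith
  nlinarith [sq_nonneg t, sq_nonneg (1 - t), L1, L2, L3,
    mul_le_mul_of_nonneg_left (by linarith [L1] : A' ≤ c 1) (sq_nonneg t),
    mul_le_mul_of_nonneg_left (by linarith [L2] : B' ≤ c 3) (sq_nonneg (1 - t))]

noncomputable def pp (A : ℝ) : Fin 4 → ℝ := ![A, A, -(A / (A + 1)), 1]
noncomputable def qq (A ε : ℝ) : Fin 4 → ℝ := ![A, A, -(A / (A + 1)) - ε, 1]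
noncomputable def mm (Ab γ δ : ℝ) : Fin 4 → ℝ := ![Ab, Ab, -γ - δ, 1]

lemma sum4 (w y : Fin 4 → ℝ) :
    ∑ m, w m * y m = w 0 * y 0 + w 1 * y 1 + w 2 * y 2 + w 3 * y 3 := by
  rw [Fin.sum_univ_four]

lemma pp0 (A : ℝ) : pp A 0 = A := rfl
lemma pp1 (A : ℝ) : pp A 1 = A := rfl
lemma pp2 (A : ℝ) : pp A 2 = -(A / (A + 1)) := rfl
lemma pp3 (A : ℝ) : pp A 3 = 1 := rfl
lemma qq0 (A ε : ℝ) : qq A ε 0 = A := rfl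
lemma qq1 (A ε : ℝ) : qq A ε 1 = A := rfl
lemma qq2 (A ε : ℝ) : qq A ε 2 = -(A / (A + 1)) - ε := rfl
lemma qq3 (A ε : ℝ) : qq A ε 3 = 1 := rfl
lemma mm0 (Ab γ δ : ℝ) : mm Ab γ δ 0 = Ab := rfl
lemma mm1 (Ab γ δ : ℝ) : mm Ab γ δ 1 = Ab := rfl
lemma mm2 (Ab γ δ : ℝ) : mm Ab γ δ 2 = -γ - δ := rfl
lemma mm3 (Ab γ δ : ℝ) : mm Ab γ δ 3 = 1 := rfl

lemma mem_pp (A : ℝ) (hA : 1 ≤ A) :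
    ∃ F : ℝ × ℝ → ℝ × ℝ, ContinuousOn F E ∧
      Solves (fun _ => pp A 0) (fun _ => pp A 1) (fun _ => pp A 2) (fun _ => pp A 3) F := by
  have hA0 : (0:ℝ) < A := by linarith
  have hA1 : (0:ℝ) < A + 1 := by linarith
  apply mem_K (pp A) A 1 hA0 one_pos
  · rw [pp0]
  · rw [pp0]; exact hA
  · rw [pp1]
  · rw [pp3]
  · rw [pp2]
    have : (A + 1) * (A / (A + 1)) = A := by field_simp
    nlinarith
  · rw [pp2]
    have h1 : A / (A + 1) ≤ 1 := by
      rw [div_le_one hA1]; linarith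
    nlinarith

lemma nonmem_qq (A ε : ℝ) (hA : 1 ≤ A) (hε : 0 < ε) :
    ¬ ∃ F : ℝ × ℝ → ℝ × ℝ, ContinuousOn F E ∧
      Solves (fun _ => qq A ε 0) (fun _ => qq A ε 1) (fun _ => qq A ε 2) (fun _ => qq A ε 3) F := by
  have hA1 : (0:ℝ) < A + 1 := by linarith
  apply nonmem_K (qq A ε) (1 / (A + 1))
  · positivity
  · rw [div_le_one hA1]; linarith
  · rw [qq1, qq2, qq3]
    have hkey : (1 / (A + 1)) ^ 2 * A + (1 - 1 / (A + 1)) ^ 2 * 1 = A / (A + 1) := by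
      field_simp
      ring
    rw [hkey]
    linarith

lemma mem_mm (Ab γ δ : ℝ) (hAb : 1 ≤ Ab) (hγ : 0 ≤ γ)
    (hδ : 0 < δ) (hc : γ + δ ≤ Ab / (Ab + 1)) :
    ∃ F : ℝ × ℝ → ℝ × ℝ, ContinuousOn F E ∧
      Solves (fun _ => mm Ab γ δ 0) (fun _ => mm Ab γ δ 1) (fun _ => mm Ab γ δ 2)
        (fun _ => mm Ab γ δ 3) F := by
  have hAb0 : (0:ℝ) < Ab := by linarith
  have hAb1 : (0:ℝ) < Ab + 1 := by linarith
  have hfe : (Ab + 1) * (Ab / (Ab + 1)) = Ab := by field_simp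
  have hd1 : Ab / (Ab + 1) ≤ 1 := by rw [div_le_one hAb1]; linarith
  apply mem_K (mm Ab γ δ) Ab 1 hAb0 one_pos
  · rw [mm0]
  · rw [mm0]; exact hAb
  · rw [mm1]
  · rw [mm3]
  · rw [mm2]
    have h2 : (Ab + 1) * (γ + δ) ≤ Ab := by
      calc (Ab + 1) * (γ + δ) ≤ (Ab + 1) * (Ab / (Ab + 1)) :=
            mul_le_mul_of_nonneg_left hc hAb1.le
        _ = Ab := hfe
    nlinarith
  · rw [mm2]
    nlinarith

theorem stmt_14 :
    ¬ ∃ (k : ℕ) (a : Fin k → Fin 4 → ℝ) (b : Fin k → ℝ) (strict : Fin k → Bool),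
      {c : Fin 4 → ℝ | ∃ F : ℝ × ℝ → ℝ × ℝ, ContinuousOn F E ∧
          Solves (fun _ => c 0) (fun _ => c 1) (fun _ => c 2) (fun _ => c 3) F} =
        ⋂ j : Fin k, {c : Fin 4 → ℝ |
          if strict j then ∑ i, a j i * c i < b j else ∑ i, a j i * c i ≤ b j} := by
  classical
  rintro ⟨k, a, b, strict, hK⟩
  have hmem_iff : ∀ c : Fin 4 → ℝ,
      (∃ F : ℝ × ℝ → ℝ × ℝ, ContinuousOn F E ∧
        Solves (fun _ => c 0) (fun _ => c 1) (fun _ => c 2) (fun _ => c 3) F) ↔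
      ∀ j : Fin k, (if strict j then ∑ i, a j i * c i < b j else ∑ i, a j i * c i ≤ b j) := by
    intro c
    have := Set.ext_iff.mp hK c
    simpa [Set.mem_iInter] using this
  -- the family of boundary points
  have hAi1 : ∀ i : Fin (k + 1), (1:ℝ) ≤ (i : ℕ) + 1 := by
    intro i
    have : (0:ℝ) ≤ ((i : ℕ) : ℝ) := Nat.cast_nonneg _
    linarith
  -- key step: each boundary point lies on a non-strict active hyperplane with a j 2 < 0
  have key : ∀ i : Fin (k + 1), ∃ j : Fin k, strict j = false ∧
      (∑ m, a j m * pp ((i : ℕ) + 1) m) = b j ∧ a j 2 < 0 := by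
    intro i
    set A : ℝ := (i : ℕ) + 1 with hAdef
    have hA : (1:ℝ) ≤ A := hAi1 i
    have hub : ∀ j : Fin k, (if strict j then ∑ m, a j m * pp A m < b j
        else ∑ m, a j m * pp A m ≤ b j) := (hmem_iff (pp A)).mp (mem_pp A hA)
    have hviol : ∀ n : ℕ, ∃ j : Fin k,
        b j ≤ ∑ m, a j m * qq A (1 / ((n:ℝ) + 1)) m ∧
        (strict j = false → b j < ∑ m, a j m * qq A (1 / ((n:ℝ) + 1)) m) := by
      intro n
      have hεpos : (0:ℝ) < 1 / ((n:ℝ) + 1) := by positivity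
      have h1 : ¬ ∀ j : Fin k, (if strict j then ∑ m, a j m * qq A (1 / ((n:ℝ) + 1)) m < b j
          else ∑ m, a j m * qq A (1 / ((n:ℝ) + 1)) m ≤ b j) := by
        intro hall
        exact nonmem_qq A _ hA hεpos ((hmem_iff _).mpr hall)
      push_neg at h1
      obtain ⟨j, hj⟩ := h1
      refine ⟨j, ?_, ?_⟩
      · rcases hs : strict j with _ | _
        · rw [hs] at hj; simp only [if_neg Bool.false_ne_true] at hj
          exact (not_le.mp hj).le
        · rw [hs] at hj; simp only [if_pos rfl] at hj
          exact not_lt.mp hj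
      · intro hs; rw [hs] at hj; simp only [if_neg Bool.false_ne_true] at hj
        exact not_le.mp hj
    choose f hf1 hf2 using hviol
    obtain ⟨j, hjinf'⟩ := Finite.exists_infinite_fiber f
    have hjinf : (f ⁻¹' {j}).Infinite := Set.infinite_coe_iff.mp hjinf'
    -- the dot product identity
    have hdq : ∀ n : ℕ, ∑ m, a j m * qq A (1 / ((n:ℝ) + 1)) m
        = (∑ m, a j m * pp A m) - (1 / ((n:ℝ) + 1)) * a j 2 := by
      intro n
      rw [sum4, sum4, pp0, pp1, pp2, pp3, qq0, qq1, qq2, qq3]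
      ring
    -- active: b j ≤ dot
    have hge : b j ≤ ∑ m, a j m * pp A m := by
      apply le_of_forall_pos_le_add
      intro ε hε
      obtain ⟨nn, hnn⟩ := exists_nat_gt (|a j 2| / ε)
      obtain ⟨n, hnmem, hnot⟩ := hjinf.exists_notMem_finset (Finset.range (nn + 1))
      have hfn : f n = j := hnmem
      have hnn' : nn + 1 ≤ n := by
        by_contra hcon
        exact hnot (Finset.mem_range.mpr (by omega))
      have hn1 : (0:ℝ) < (n:ℝ) + 1 := by positivity
      have hle1 : (nn:ℝ) ≤ (n:ℝ) + 1 := by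
        have : (nn:ℝ) ≤ (n:ℝ) := Nat.cast_le.mpr (by omega)
        linarith
      have habs : |a j 2| < ε * ((n:ℝ) + 1) := by
        have h1 : |a j 2| < ε * nn := by
          have := (div_lt_iff₀ hε).mp hnn
          linarith
        have h2 : ε * (nn:ℝ) ≤ ε * ((n:ℝ) + 1) := by nlinarith
        linarith
      have hstep : -(1 / ((n:ℝ) + 1)) * a j 2 ≤ (1 / ((n:ℝ) + 1)) * |a j 2| := by
        have h0 : (0:ℝ) ≤ 1 / ((n:ℝ) + 1) := by positivity
        have := mul_le_mul_of_nonneg_left (neg_le_abs (a j 2)) h0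
        linarith
      have habs2 : (1 / ((n:ℝ) + 1)) * |a j 2| < ε := by
        rw [div_mul_eq_mul_div, one_mul, div_lt_iff₀ hn1]
        linarith
      have hb := hf1 n
      rw [hfn] at hb
      rw [hdq n] at hb
      linarith
    -- conclude for this i
    rcases hs : strict j with _ | _
    · -- non-strict: equality and a j 2 < 0
      have hub' := hub j
      rw [hs] at hub'
      simp only [if_neg Bool.false_ne_true] at hub'
      have heq : (∑ m, a j m * pp A m) = b j := le_antisymm hub' hge
      obtain ⟨n, hnmem⟩ := hjinf.nonempty
      have hfn : f n = j := hnmem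
      have hlt := hf2 n
      rw [hfn] at hlt
      have hlt' := hlt hs
      rw [hdq n] at hlt'
      have hn1 : (0:ℝ) < 1 / ((n:ℝ) + 1) := by positivity
      have hneg : a j 2 < 0 := by nlinarith
      exact ⟨j, hs, heq, hneg⟩
    · -- strict: contradiction
      have hub' := hub j
      rw [hs] at hub'
      simp only [if_pos rfl] at hub'
      exact absurd hge (not_le.mpr hub')
  -- choose active hyperplanes and pigeonhole
  choose jf hjf1 hjf2 hjf3 using key
  obtain ⟨i, i', hii', hjeq⟩ := Fintype.exists_ne_map_eq_of_card_lt jf (by simp)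
  set j := jf i with hjdef
  have hs : strict j = false := hjf1 i
  have heq1 : (∑ m, a j m * pp ((i : ℕ) + 1) m) = b j := hjf2 i
  have heq2 : (∑ m, a j m * pp ((i' : ℕ) + 1) m) = b j := by
    rw [hjeq]; exact hjf2 i'
  have hneg : a j 2 < 0 := hjf3 i
  -- midpoint with curvature slack
  set A1 : ℝ := (i : ℕ) + 1 with hA1def
  set A2 : ℝ := (i' : ℕ) + 1 with hA2def
  have hA1 : (1:ℝ) ≤ A1 := hAi1 i
  have hA2 : (1:ℝ) ≤ A2 := hAi1 i'
  have hA12 : A1 ≠ A2 := by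
    intro hcon
    apply hii'
    have : ((i : ℕ) : ℝ) = ((i' : ℕ) : ℝ) := by
      rw [hA1def, hA2def] at hcon; linarith
    exact Fin.ext (Nat.cast_injective this)
  set Ab : ℝ := (A1 + A2) / 2 with hAbdef
  set γ : ℝ := (A1 / (A1 + 1) + A2 / (A2 + 1)) / 2 with hγdef
  have hAb1 : (1:ℝ) ≤ Ab := by rw [hAbdef]; linarith
  have hx1 : (0:ℝ) < A1 + 1 := by linarith
  have hx2 : (0:ℝ) < A2 + 1 := by linarith
  have hxb : (0:ℝ) < Ab + 1 := by linarith
  have hγ0 : 0 ≤ γ := by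
    rw [hγdef]
    have : 0 ≤ A1 / (A1 + 1) := by positivity
    have : 0 ≤ A2 / (A2 + 1) := by positivity
    linarith
  have hgap : γ < Ab / (Ab + 1) := by
    have hdiff : Ab / (Ab + 1) - γ
        = (A1 - A2) ^ 2 / (2 * (A1 + 1) * (A2 + 1) * (A1 + A2 + 2)) := by
      rw [hγdef, hAbdef]
      field_simp
      ring
    have hne : A1 - A2 ≠ 0 := sub_ne_zero.mpr hA12
    have hpos : 0 < (A1 - A2) ^ 2 / (2 * (A1 + 1) * (A2 + 1) * (A1 + A2 + 2)) := by
      apply div_pos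
      · positivity
      · have h2 : (0:ℝ) < A1 + A2 + 2 := by linarith
        have := mul_pos (mul_pos (mul_pos two_pos hx1) hx2) h2
        linarith
    linarith
  set δ : ℝ := (Ab / (Ab + 1) - γ) / 2 with hδdef
  have hδ : 0 < δ := by rw [hδdef]; linarith
  have hcm : γ + δ ≤ Ab / (Ab + 1) := by rw [hδdef]; linarith
  -- midpoint membership
  have hmmK := (hmem_iff (mm Ab γ δ)).mp (mem_mm Ab γ δ hAb1 hγ0 hδ hcm) j
  rw [hs] at hmmK
  simp only [if_neg Bool.false_ne_true] at hmmK
  -- the dot product of the midpoint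
  have hdotm : (∑ m, a j m * mm Ab γ δ m) = b j - δ * a j 2 := by
    have e1 := sum4 (a j) (pp A1)
    have e2 := sum4 (a j) (pp A2)
    have e3 := sum4 (a j) (mm Ab γ δ)
    rw [pp0, pp1, pp2, pp3] at e1 e2
    rw [mm0, mm1, mm2, mm3] at e3
    rw [e1] at heq1
    rw [e2] at heq2
    rw [e3, hAbdef, hγdef]
    linarith
  rw [hdotm] at hmmK
  nlinarith [mul_pos hδ (neg_pos.mpr hneg)]
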